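/- arXiv:1106.1391 — 2 statements merged into one kernel-verified Lean document; each statement's English description precedes it below -/
import Mathlib

section
/- Let k be a commutative ring, R = k[x_1,…,x_d] a polynomial ring, S ⊆ R a multiplicative set and A = S⁻¹R (the same statement holds for A = k[[x_1,…,x_d]]). Let I ⊆ A be an ideal, m ≥ 1 an integer and n an integer with n ≥ m or n = ∞. Then for every n-integrable E ∈ HS_k(A/I;m) there exists an I-logarithmically n-integrable D ∈ HS_k(log I;m) with D̄ = E; that is, Π_m restricts to a surjection from the I-logarithmically n-integrable elements of HS_k(log I;m) onto the n-integrable elements of HS_k(A/I;m). -/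
/-!
A Hasse–Schmidt derivation of length `n` of a `k`-algebra `B` is the same thing as a `k`-algebra
map `B → B⟦t⟧/(t^(n+1))` (into `B⟦t⟧` when `n = ∞`) that is the identity modulo `t`. Given such
a map `ψ` for `A/I`, compose it with `π : A → A/I` and lift the result through the surjection
`A⟦t⟧/(t^(n+1)) → (A/I)⟦t⟧/(t^(n+1))`: on `k[x_1,…,x_d]` send `x_j` to any preimage of
`ψ(π x_j)` with constant term `x_j`; this extends to `A = S⁻¹k[x]` because series whose constant
term is a unit are units. The HS derivation of `A` so obtained reduces to the given one on `A/I`,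
hence preserves `I = ker π`, and its components of index `≤ m` induce `E`.
-/

/-- `IsHS k A n D` says that the sequence `D` of `k`-linear endomorphisms of `A` is a
Hasse–Schmidt derivation of `A` over `k` of length `n` (with `n = ⊤` encoding length `∞`):
`D 0 = id` and the Leibniz rule `D i (x*y) = ∑_{r+s=i} D r x * D s y` holds for `1 ≤ i ≤ n`.
(The values `D i` for `i > n` are irrelevant.) -/
def IsHS (k A : Type*) [CommRing k] [CommRing A] [Algebra k A]
    (n : ℕ∞) (D : ℕ → (A →ₗ[k] A)) : Prop :=
  D 0 = LinearMap.id ∧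
  ∀ i : ℕ, 1 ≤ i → (i : ℕ∞) ≤ n → ∀ x y : A,
    D i (x * y) = ∑ p ∈ Finset.HasAntidiagonal.antidiagonal i, D p.1 x * D p.2 y

open PowerSeries Finset

noncomputable section

namespace PowerSeries

variable {k R B : Type*} [CommRing k] [CommRing R] [Algebra k R] [CommRing B] [Algebra k B]

variable (R) in
/-- For finite `n` this is the ideal `(X ^ (n + 1))`, and for `n = ⊤` it is `⊥`. -/
def truncIdeal (n : ℕ∞) : Ideal R⟦X⟧ where
  carrier := {f | ∀ i : ℕ, (i : ℕ∞) ≤ n → coeff i f = 0}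
  zero_mem' _ _ := map_zero _
  add_mem' hf hg i hi := by rw [map_add, hf i hi, hg i hi, add_zero]
  smul_mem' a f hf i hi := by
    rw [smul_eq_mul, coeff_mul]
    refine sum_eq_zero fun p hp => ?_
    rw [hf p.2 (le_trans (by exact_mod_cast HasAntidiagonal.antidiagonal.snd_le hp) hi),
      mul_zero]

theorem mem_truncIdeal {n : ℕ∞} {f : R⟦X⟧} :
    f ∈ truncIdeal R n ↔ ∀ i : ℕ, (i : ℕ∞) ≤ n → coeff i f = 0 := Iff.rfl

theorem mk_eq_mk_iff_coeff_eq {n : ℕ∞} {f g : R⟦X⟧} :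
    Ideal.Quotient.mk (truncIdeal R n) f = Ideal.Quotient.mk _ g ↔
      ∀ i : ℕ, (i : ℕ∞) ≤ n → coeff i f = coeff i g := by
  simp only [Ideal.Quotient.mk_eq_mk_iff_sub_mem, mem_truncIdeal, map_sub, sub_eq_zero]

variable (k) in
/-- Only meaningful for `i ≤ n`; it is `0` for `i > n`. -/
def truncCoeff (n : ℕ∞) (i : ℕ) :
    (R⟦X⟧ ⧸ truncIdeal R n) →ₗ[k] R :=
  Submodule.liftQ ((truncIdeal R n).restrictScalars k)
      (if (i : ℕ∞) ≤ n then (coeff i).restrictScalars k else 0)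
      (fun f hf => by split_ifs with hi; exacts [hf i hi, rfl]) ∘ₗ
    (Submodule.Quotient.restrictScalarsEquiv k (truncIdeal R n)).symm.toLinearMap

theorem truncCoeff_mk {n : ℕ∞} {i : ℕ} (hi : (i : ℕ∞) ≤ n) (f : R⟦X⟧) :
    truncCoeff k n i (Ideal.Quotient.mk _ f) = coeff i f := by
  simp only [truncCoeff, if_pos hi]
  rfl

variable (k) in
def truncConstantCoeff (n : ℕ∞) :
    (R⟦X⟧ ⧸ truncIdeal R n) →ₐ[k] R :=
  Ideal.Quotient.liftₐ _ { constantCoeff with commutes' := fun r => by simp [algebraMap_apply] }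
    fun f hf => by simpa using hf 0 (by simp)

theorem truncConstantCoeff_mk (n : ℕ∞) (f : R⟦X⟧) :
    truncConstantCoeff k n (Ideal.Quotient.mk _ f) = constantCoeff f := rfl

theorem truncCoeff_zero (n : ℕ∞) (x : R⟦X⟧ ⧸ truncIdeal R n) :
    truncCoeff k n 0 x = truncConstantCoeff k n x := by
  obtain ⟨f, rfl⟩ := Ideal.Quotient.mk_surjective x
  rw [truncCoeff_mk (by simp), truncConstantCoeff_mk, coeff_zero_eq_constantCoeff_apply]

theorem isUnit_of_isUnit_truncConstantCoeff {n : ℕ∞} {x : R⟦X⟧ ⧸ truncIdeal R n}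
    (hx : IsUnit (truncConstantCoeff k n x)) : IsUnit x := by
  obtain ⟨f, rfl⟩ := Ideal.Quotient.mk_surjective x
  exact (isUnit_iff_constantCoeff.mpr hx).map _

def truncMap (n : ℕ∞) (g : R →ₐ[k] B) :
    (R⟦X⟧ ⧸ truncIdeal R n) →ₐ[k] B⟦X⟧ ⧸ truncIdeal B n :=
  Ideal.quotientMapₐ _ (mapAlgHom g) fun f hf i hi => by
    rw [mapAlgHom_apply, coeff_map, hf i hi, map_zero]

theorem truncMap_mk (n : ℕ∞) (g : R →ₐ[k] B) (f : R⟦X⟧) :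
    truncMap n g (Ideal.Quotient.mk _ f) = Ideal.Quotient.mk _ (map g f) := rfl

theorem truncCoeff_truncMap {n : ℕ∞} {i : ℕ} (hi : (i : ℕ∞) ≤ n) (g : R →ₐ[k] B)
    (x : R⟦X⟧ ⧸ truncIdeal R n) : truncCoeff k n i (truncMap n g x) = g (truncCoeff k n i x) := by
  obtain ⟨f, rfl⟩ := Ideal.Quotient.mk_surjective x
  rw [truncMap_mk, truncCoeff_mk hi, truncCoeff_mk hi, coeff_map, AlgHom.coe_toRingHom]

theorem exists_map_eq_and_constantCoeff_eq {g : R →+* B} (hg : Function.Surjective g) (h : B⟦X⟧)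
    (a : R) (ha : g a = constantCoeff h) : ∃ f : R⟦X⟧, map g f = h ∧ constantCoeff f = a := by
  refine ⟨mk fun i => if i = 0 then a else Function.surjInv hg (coeff i h), ?_, ?_⟩
  · ext i
    rcases eq_or_ne i 0 with rfl | hi
    · simp [ha]
    · simp [hi, Function.surjInv_eq]
  · simp [← coeff_zero_eq_constantCoeff_apply]

def mkLinearMap (D : ℕ → R →ₗ[k] R) : R →ₗ[k] R⟦X⟧ where
  toFun a := mk fun i => D i a
  map_add' x y := by ext; simp
  map_smul' r x := by ext; simp

end PowerSeries

namespace IsHS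

variable {k A : Type*} [CommRing k] [CommRing A] [Algebra k A] {n : ℕ∞} {D : ℕ → A →ₗ[k] A}

theorem mono {m : ℕ∞} (hD : IsHS k A n D) (hmn : m ≤ n) : IsHS k A m D :=
  ⟨hD.1, fun i hi him => hD.2 i hi (him.trans hmn)⟩

theorem leibniz (hD : IsHS k A n D) {i : ℕ} (hi : (i : ℕ∞) ≤ n) (x y : A) :
    D i (x * y) = ∑ p ∈ antidiagonal i, D p.1 x * D p.2 y := by
  rcases Nat.eq_zero_or_pos i with rfl | hpos
  · simp [hD.1]
  · exact hD.2 i hpos hi x y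

def toAlgHom (hD : IsHS k A n D) : A →ₐ[k] A⟦X⟧ ⧸ truncIdeal A n :=
  have hmul : ∀ x y, Ideal.Quotient.mk (truncIdeal A n) (mkLinearMap D (x * y)) =
      Ideal.Quotient.mk _ (mkLinearMap D x) * Ideal.Quotient.mk _ (mkLinearMap D y) := by
    intro x y
    rw [← map_mul, mk_eq_mk_iff_coeff_eq]
    intro i hi
    simp [mkLinearMap, coeff_mul, hD.leibniz hi]
  AlgHom.ofLinearMap ((Ideal.Quotient.mkₐ k _).toLinearMap ∘ₗ mkLinearMap D)
    (by
      -- the image of `1` is an idempotent unit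
      have hunit : IsUnit (Ideal.Quotient.mk (truncIdeal A n) (mkLinearMap D 1)) :=
        (isUnit_iff_constantCoeff.mpr (by
          simp [mkLinearMap, ← coeff_zero_eq_constantCoeff_apply, hD.1])).map _
      refine hunit.mul_left_cancel ?_
      simpa using (hmul 1 1).symm)
    hmul

theorem toAlgHom_apply (hD : IsHS k A n D) (a : A) :
    hD.toAlgHom a = Ideal.Quotient.mk _ (mk fun i => D i a) := rfl

theorem truncCoeff_toAlgHom (hD : IsHS k A n D) {i : ℕ} (hi : (i : ℕ∞) ≤ n) (a : A) :
    truncCoeff k n i (hD.toAlgHom a) = D i a := by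
  rw [toAlgHom_apply, truncCoeff_mk hi, coeff_mk]

theorem truncConstantCoeff_comp_toAlgHom (hD : IsHS k A n D) :
    (truncConstantCoeff k n).comp hD.toAlgHom = AlgHom.id k A := by
  ext a
  rw [AlgHom.comp_apply, ← truncCoeff_zero, truncCoeff_toAlgHom hD (by simp), hD.1,
    LinearMap.id_apply, AlgHom.id_apply]

end IsHS

namespace PowerSeries

variable {k A Q : Type*} [CommRing k] [CommRing A] [Algebra k A] [CommRing Q] [Algebra k Q]
  {n : ℕ∞}

def truncCoeffs (Φ : A →ₐ[k] A⟦X⟧ ⧸ truncIdeal A n) (i : ℕ) : A →ₗ[k] A :=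
  truncCoeff k n i ∘ₗ Φ.toLinearMap

theorem isHS_truncCoeffs {Φ : A →ₐ[k] A⟦X⟧ ⧸ truncIdeal A n}
    (hΦ : (truncConstantCoeff k n).comp Φ = AlgHom.id k A) : IsHS k A n (truncCoeffs Φ) := by
  refine ⟨LinearMap.ext fun a => ?_, fun i _ hi x y => ?_⟩
  · simpa [truncCoeffs, truncCoeff_zero] using DFunLike.congr_fun hΦ a
  obtain ⟨f, hf⟩ := Ideal.Quotient.mk_surjective (Φ x)
  obtain ⟨g, hg⟩ := Ideal.Quotient.mk_surjective (Φ y)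
  have hle : ∀ p ∈ antidiagonal i, (p.1 : ℕ∞) ≤ n ∧ (p.2 : ℕ∞) ≤ n := fun p hp =>
    ⟨le_trans (by exact_mod_cast HasAntidiagonal.antidiagonal.fst_le hp) hi,
      le_trans (by exact_mod_cast HasAntidiagonal.antidiagonal.snd_le hp) hi⟩
  simp only [truncCoeffs, LinearMap.comp_apply, AlgHom.toLinearMap_apply]
  rw [map_mul, ← hf, ← hg, ← map_mul, truncCoeff_mk hi, coeff_mul]
  exact sum_congr rfl fun p hp => by rw [truncCoeff_mk (hle p hp).1, truncCoeff_mk (hle p hp).2]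

theorem truncCoeffs_apply_of_comp_eq {π : A →ₐ[k] Q} {Φ : A →ₐ[k] A⟦X⟧ ⧸ truncIdeal A n}
    {ψ : Q →ₐ[k] Q⟦X⟧ ⧸ truncIdeal Q n} (h : (truncMap n π).comp Φ = ψ.comp π) {i : ℕ}
    (hi : (i : ℕ∞) ≤ n) (a : A) : π (truncCoeffs Φ i a) = truncCoeff k n i (ψ (π a)) := by
  rw [truncCoeffs, LinearMap.comp_apply, AlgHom.toLinearMap_apply, ← truncCoeff_truncMap hi,
    ← AlgHom.comp_apply, h, AlgHom.comp_apply]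

end PowerSeries

theorem exists_algHom_lift {k σ A Q : Type*} [CommRing k] [CommRing A] [Algebra k A]
    [Algebra (MvPolynomial σ k) A] [IsScalarTower k (MvPolynomial σ k) A]
    (S : Submonoid (MvPolynomial σ k)) [IsLocalization S A] [CommRing Q] [Algebra k Q]
    {π : A →ₐ[k] Q} (hπ : Function.Surjective π) {n : ℕ∞}
    (ψ : Q →ₐ[k] Q⟦X⟧ ⧸ truncIdeal Q n)
    (hψ : (truncConstantCoeff k n).comp ψ = AlgHom.id k Q) :
    ∃ Φ : A →ₐ[k] A⟦X⟧ ⧸ truncIdeal A n,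
      (truncConstantCoeff k n).comp Φ = AlgHom.id k A ∧ (truncMap n π).comp Φ = ψ.comp π := by
  let x : σ → A := fun j => algebraMap (MvPolynomial σ k) A (MvPolynomial.X j)
  have hlift : ∀ j, ∃ F : A⟦X⟧,
      Ideal.Quotient.mk _ (map (π : A →+* Q) F) = ψ (π (x j)) ∧ constantCoeff F = x j := by
    intro j
    obtain ⟨G, hG⟩ := Ideal.Quotient.mk_surjective (ψ (π (x j)))
    obtain ⟨F, hFG, hF0⟩ :=
      exists_map_eq_and_constantCoeff_eq (g := (π : A →+* Q)) hπ G (x j) (by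
        rw [← truncConstantCoeff_mk (k := k) n, hG, ← AlgHom.comp_apply, hψ, AlgHom.id_apply,
          AlgHom.coe_toRingHom])
    exact ⟨F, by rw [hFG, hG], hF0⟩
  choose F hFψ hF0 using hlift
  let φ := (Ideal.Quotient.mkₐ k (truncIdeal A n)).comp (MvPolynomial.aeval F)
  have hεφ : (truncConstantCoeff k n).comp φ = Algebra.algHom k _ A :=
    MvPolynomial.algHom_ext fun j => by
      simp only [φ, AlgHom.comp_apply, MvPolynomial.aeval_X, Ideal.Quotient.mkₐ_eq_mk,
        truncConstantCoeff_mk, hF0]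
      rfl
  have hunit : ∀ s : S, IsUnit (φ s) := fun s => isUnit_of_isUnit_truncConstantCoeff (k := k) (by
    rw [← AlgHom.comp_apply, hεφ]
    exact IsLocalization.map_units A s)
  let Φ : A →ₐ[k] A⟦X⟧ ⧸ truncIdeal A n := IsLocalization.liftAlgHom hunit
  have hΦ : Φ.comp (Algebra.algHom k _ A) = φ := by
    ext j
    simp only [Φ, AlgHom.comp_apply, IsLocalization.coe_liftAlgHom, Algebra.algHom]
    exact IsLocalization.lift_eq hunit _
  refine ⟨Φ, IsLocalization.algHom_ext S ?_, IsLocalization.algHom_ext S ?_⟩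
  · rw [AlgHom.comp_assoc, hΦ, hεφ, AlgHom.id_comp]
  · rw [AlgHom.comp_assoc, hΦ]
    refine MvPolynomial.algHom_ext fun j => ?_
    change truncMap n π (Ideal.Quotient.mk _ (MvPolynomial.aeval F (MvPolynomial.X j))) =
      ψ (π (x j))
    rw [MvPolynomial.aeval_X, truncMap_mk, hFψ]

end

theorem stmt_10_general (k : Type*) [CommRing k] (d : ℕ)
    (S : Submonoid (MvPolynomial (Fin d) k))
    (I : Ideal (Localization S)) (m : ℕ) (n : ℕ∞) (hmn : (m : ℕ∞) ≤ n)
    (E : ℕ → ((Localization S ⧸ I) →ₗ[k] (Localization S ⧸ I)))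
    (hint : ∃ Z : ℕ → ((Localization S ⧸ I) →ₗ[k] (Localization S ⧸ I)),
      IsHS k (Localization S ⧸ I) n Z ∧ ∀ i ≤ m, Z i = E i) :
    ∃ D : ℕ → (Localization S →ₗ[k] Localization S),
      IsHS k (Localization S) m D ∧
      (∀ i ≤ m, ∀ x ∈ I, D i x ∈ I) ∧
      (∀ i ≤ m, ∀ a : Localization S,
        Ideal.Quotient.mk I (D i a) = E i (Ideal.Quotient.mk I a)) ∧
      ∃ U : ℕ → (Localization S →ₗ[k] Localization S),
        IsHS k (Localization S) n U ∧
        (∀ i : ℕ, (i : ℕ∞) ≤ n → ∀ x ∈ I, U i x ∈ I) ∧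
        (∀ i ≤ m, U i = D i) := by
  obtain ⟨Z, hZ, hZE⟩ := hint
  obtain ⟨Φ, hΦ, hΦZ⟩ := exists_algHom_lift S (Ideal.Quotient.mkₐ_surjective k I) hZ.toAlgHom
    hZ.truncConstantCoeff_comp_toAlgHom
  have hUZ : ∀ i : ℕ, (i : ℕ∞) ≤ n → ∀ a,
      Ideal.Quotient.mk I (truncCoeffs Φ i a) = Z i (Ideal.Quotient.mk I a) := fun i hi a => by
    rw [← hZ.truncCoeff_toAlgHom hi]
    exact truncCoeffs_apply_of_comp_eq hΦZ hi a
  have hUlog : ∀ i : ℕ, (i : ℕ∞) ≤ n → ∀ x ∈ I, truncCoeffs Φ i x ∈ I := fun i hi x hx => by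
    rw [← Ideal.Quotient.eq_zero_iff_mem, hUZ i hi, Ideal.Quotient.eq_zero_iff_mem.mpr hx,
      map_zero]
  have hle : ∀ i ≤ m, (i : ℕ∞) ≤ n := fun i hi => (Nat.cast_le.mpr hi).trans hmn
  exact ⟨truncCoeffs Φ, (isHS_truncCoeffs hΦ).mono hmn, fun i hi => hUlog i (hle i hi),
    fun i hi a => by rw [hUZ i (hle i hi), hZE i hi], truncCoeffs Φ, isHS_truncCoeffs hΦ, hUlog,
    fun _ _ => rfl⟩

/-- **Statement 10.** Let `R = k[x_1,…,x_d]`, `S ⊆ R` multiplicative, `A = S⁻¹R`,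
`I ⊆ A` an ideal, `1 ≤ m` finite and `n ≥ m` (possibly `∞`). Every `n`-integrable
`E ∈ HS_k(A/I;m)` is induced by some `I`-logarithmically `n`-integrable
`D ∈ HS_k(log I;m)`. -/
theorem stmt_10 (k : Type*) [CommRing k] (d : ℕ)
    (S : Submonoid (MvPolynomial (Fin d) k))
    (I : Ideal (Localization S)) (m : ℕ) (hm : 1 ≤ m) (n : ℕ∞) (hmn : (m : ℕ∞) ≤ n)
    (E : ℕ → ((Localization S ⧸ I) →ₗ[k] (Localization S ⧸ I)))
    (hE : IsHS k (Localization S ⧸ I) m E)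
    (hint : ∃ Z : ℕ → ((Localization S ⧸ I) →ₗ[k] (Localization S ⧸ I)),
      IsHS k (Localization S ⧸ I) n Z ∧ ∀ i ≤ m, Z i = E i) :
    ∃ D : ℕ → (Localization S →ₗ[k] Localization S),
      IsHS k (Localization S) m D ∧
      (∀ i ≤ m, ∀ x ∈ I, D i x ∈ I) ∧
      (∀ i ≤ m, ∀ a : Localization S,
        Ideal.Quotient.mk I (D i a) = E i (Ideal.Quotient.mk I a)) ∧
      ∃ U : ℕ → (Localization S →ₗ[k] Localization S),
        IsHS k (Localization S) n U ∧
        (∀ i : ℕ, (i : ℕ∞) ≤ n → ∀ x ∈ I, U i x ∈ I) ∧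
        (∀ i ≤ m, U i = D i) :=
  stmt_10_general k d S I m n hmn E hint
end

section
/- Let k be a commutative ring, A a commutative k-algebra and n ≥ 1 an integer. Set ρ(n) = (n+1)/2 if n is odd and ρ(n) = ⌊(n+1)/3⌋ if n is even. Assume every k-derivation of A is ρ(n)-integrable (i.e. Ider_k(A;ρ(n)) = Der_k(A)). Then for every n-integrable k-derivation δ of A, the following are equivalent: (a) every n-integral of δ is (n+1)-integrable; (b) there exists an n-integral of δ which is (n+1)-integrable. -/
/-!
Hasse–Schmidt derivations of length `n` form a group under the product of their generating
series `∑ Dᵢ tⁱ` in `(End_k A)⟦t⟧`. If `D` and `E` are `n`-integrals of `δ`, then `F = D E⁻¹` is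
a Hasse–Schmidt derivation with `F₁ = 0`, and `D = F E` is `(n+1)`-integrable as soon as `F` is.

The degrees `m ≥ 2` that are odd, or all of them when `n` is odd, are cleared one at a time. If
`F` vanishes in the smaller such degrees, the Leibniz rule in degree `m` has no mixed terms, so
`F_m` is a derivation; a `ρ(n)`-integral `G` of it gives `G(t^m)`, a Hasse–Schmidt derivation of
length `m(ρ(n)+1) - 1 ≥ n + 1`, and `F G(t^m)⁻¹` vanishes in degree `m`. Once all these degrees
vanish, the Leibniz rule in degree `n + 1` has no mixed terms either (of `p + q = n + 1`, one of
`p`, `q` is such a degree), so `F` extends by `F_{n+1} = 0`.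
-/

open Finset
open PowerSeries hiding expand

namespace HasseSchmidt

section Antidiagonal

variable {M : Type*} [AddCommMonoid M]

lemma sum_antidiagonal_eq_add_of_interior {r : ℕ} (hr : 0 < r) {f : ℕ × ℕ → M}
    (hf : ∀ p ∈ antidiagonal r, 0 < p.1 → 0 < p.2 → f p = 0) :
    ∑ p ∈ antidiagonal r, f p = f (0, r) + f (r, 0) := by
  refine sum_eq_add _ _ (by simp [hr.ne]) (fun p hp hne => hf p hp ?_ ?_) (by simp) (by simp)
  all_goals
    have := mem_antidiagonal.1 hp
    obtain ⟨a, b⟩ := p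
    simp only [ne_eq, Prod.mk.injEq] at hne this ⊢
    omega

lemma sum_antidiagonal_antidiagonal_transpose (i : ℕ) (H : ℕ → ℕ → ℕ → ℕ → M) :
    ∑ p ∈ antidiagonal i, ∑ a ∈ antidiagonal p.1, ∑ b ∈ antidiagonal p.2,
        H a.1 a.2 b.1 b.2 =
      ∑ p ∈ antidiagonal i, ∑ a ∈ antidiagonal p.1, ∑ b ∈ antidiagonal p.2,
        H a.1 b.1 a.2 b.2 := by
  simp only [← sum_product', sum_sigma']
  refine sum_nbij' (fun x => ⟨(x.2.1.1 + x.2.2.1, x.2.1.2 + x.2.2.2),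
      ((x.2.1.1, x.2.2.1), (x.2.1.2, x.2.2.2))⟩)
    (fun x => ⟨(x.2.1.1 + x.2.2.1, x.2.1.2 + x.2.2.2),
      ((x.2.1.1, x.2.2.1), (x.2.1.2, x.2.2.2))⟩) ?_ ?_ ?_ ?_ ?_ <;>
  rintro ⟨⟨p₁, p₂⟩, ⟨a₁, a₂⟩, ⟨b₁, b₂⟩⟩ h <;>
  simp_all <;> omega

end Antidiagonal

section Ring

variable {R : Type*} [Ring R] {m : ℕ} {φ Q : R⟦X⟧}

lemma mul_eq_add_X_pow_mul (hQ : X ^ m ∣ Q - 1) :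
    ∃ T : R⟦X⟧, φ * Q = φ + X ^ m * (φ * T) ∧ coeff m Q = coeff m 1 + coeff 0 T := by
  obtain ⟨T, hT⟩ := hQ
  refine ⟨T, ?_, ?_⟩
  · rw [← mul_assoc, ← (commute_X_pow φ m).eq, mul_assoc, ← hT, mul_sub, mul_one,
      add_sub_cancel]
  · rw [← sub_add_cancel Q 1, hT, map_add, add_comm]
    simp [coeff_X_pow_mul']

lemma coeff_mul_of_X_pow_dvd_sub_one_of_lt (hQ : X ^ m ∣ Q - 1) {j : ℕ} (hj : j < m) :
    coeff j (φ * Q) = coeff j φ := by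
  obtain ⟨T, hφQ, -⟩ := mul_eq_add_X_pow_mul (φ := φ) hQ
  simp [hφQ, coeff_X_pow_mul', hj.not_ge]

lemma coeff_mul_of_X_pow_dvd_sub_one (hm : 0 < m) (hQ : X ^ m ∣ Q - 1) :
    coeff m (φ * Q) = coeff m φ + coeff 0 φ * coeff m Q := by
  obtain ⟨T, hφQ, hQm⟩ := mul_eq_add_X_pow_mul (φ := φ) hQ
  simp [hφQ, hQm, coeff_X_pow_mul', coeff_one, hm.ne']

lemma coeff_mul_eq_of_coeff_eq {n : ℕ} {φ' ψ ψ' : R⟦X⟧}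
    (hφ : ∀ i ≤ n, coeff i φ = coeff i φ') (hψ : ∀ i ≤ n, coeff i ψ = coeff i ψ') :
    ∀ i ≤ n, coeff i (φ * ψ) = coeff i (φ' * ψ') := by
  intro i hi
  simp only [coeff_mul]
  refine sum_congr rfl fun p hp => ?_
  have := mem_antidiagonal.1 hp
  rw [hφ p.1 (by omega), hψ p.2 (by omega)]

end Ring

variable {k A : Type*} [CommRing k] [CommRing A] [Algebra k A]

lemma _root_.IsHS.apply_mul {n : ℕ} {D : ℕ → Module.End k A} (hD : IsHS k A n D) {i : ℕ}
    (hi : i ≤ n) (x y : A) : D i (x * y) = ∑ p ∈ antidiagonal i, D p.1 x * D p.2 y := by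
  rcases Nat.eq_zero_or_pos i with rfl | hi₀
  · simp [hD.1]
  · exact hD.2 i hi₀ (by exact_mod_cast hi) x y

lemma _root_.IsHS.mono_s17 {m n : ℕ} (hmn : m ≤ n) {D : ℕ → Module.End k A}
    (hD : IsHS k A n D) : IsHS k A m D :=
  ⟨hD.1, fun i hi₁ hi x y => hD.2 i hi₁ (hi.trans (by exact_mod_cast hmn)) x y⟩

def leibnizDefect (D : ℕ → Module.End k A) (i : ℕ) (x y : A) : A :=
  D i (x * y) - ∑ p ∈ antidiagonal i, D p.1 x * D p.2 y

lemma isHS_iff_leibnizDefect {n : ℕ} {D : ℕ → Module.End k A} :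
    IsHS k A n D ↔ D 0 = LinearMap.id ∧ ∀ i ≤ n, ∀ x y, leibnizDefect D i x y = 0 := by
  simp only [leibnizDefect, sub_eq_zero]
  exact ⟨fun hD => ⟨hD.1, fun i hi => hD.apply_mul hi⟩,
    fun hD => ⟨hD.1, fun i _ hi => hD.2 i (by exact_mod_cast hi)⟩⟩

lemma leibnizDefect_one (i : ℕ) (x y : A) :
    leibnizDefect (coeff · (1 : (Module.End k A)⟦X⟧)) i x y = 0 := by
  rcases Nat.eq_zero_or_pos i with rfl | hi
  · simp [leibnizDefect]
  · rw [leibnizDefect, sub_eq_zero, sum_eq_zero]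
    · simp [coeff_one, hi.ne']
    · intro p hp
      have := mem_antidiagonal.1 hp
      rcases Nat.eq_zero_or_pos p.1 with h | h
      · simp [coeff_one, h, show p.2 ≠ 0 by omega]
      · simp [coeff_one, h.ne']

lemma coeff_mul_apply (φ ψ : (Module.End k A)⟦X⟧) (i : ℕ) (z : A) :
    coeff i (φ * ψ) z = ∑ p ∈ antidiagonal i, coeff p.1 φ (coeff p.2 ψ z) := by
  simp [coeff_mul, LinearMap.sum_apply]

lemma leibnizDefect_mul {n i : ℕ} {φ : (Module.End k A)⟦X⟧} (hφ : IsHS k A n (coeff · φ))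
    (hi : i ≤ n) (ψ : (Module.End k A)⟦X⟧) (x y : A) :
    leibnizDefect (coeff · (φ * ψ)) i x y =
      ∑ p ∈ antidiagonal i, coeff p.1 φ (leibnizDefect (coeff · ψ) p.2 x y) := by
  have hsum : ∑ p ∈ antidiagonal i, coeff p.1 (φ * ψ) x * coeff p.2 (φ * ψ) y =
      ∑ p ∈ antidiagonal i,
        coeff p.1 φ (∑ q ∈ antidiagonal p.2, coeff q.1 ψ x * coeff q.2 ψ y) :=
    calc _ = ∑ p ∈ antidiagonal i, ∑ a ∈ antidiagonal p.1, ∑ b ∈ antidiagonal p.2,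
          coeff a.1 φ (coeff a.2 ψ x) * coeff b.1 φ (coeff b.2 ψ y) := by
          simp only [coeff_mul_apply, sum_mul_sum]
      _ = ∑ p ∈ antidiagonal i, ∑ a ∈ antidiagonal p.1, ∑ b ∈ antidiagonal p.2,
          coeff a.1 φ (coeff b.1 ψ x) * coeff a.2 φ (coeff b.2 ψ y) :=
        sum_antidiagonal_antidiagonal_transpose i
          fun c g e h => coeff c φ (coeff g ψ x) * coeff e φ (coeff h ψ y)
      _ = _ := by
        refine sum_congr rfl fun p hp => ?_
        have := mem_antidiagonal.1 hp
        rw [map_sum, sum_comm]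
        exact sum_congr rfl fun q _ => (hφ.apply_mul (by omega) _ _).symm
  show coeff i (φ * ψ) (x * y) - _ = _
  rw [hsum, coeff_mul_apply]
  simp only [leibnizDefect, map_sub, sum_sub_distrib]

lemma eq_zero_of_forall_sum_antidiagonal_eq_zero {R M : Type*} [Semiring R] [AddCommMonoid M]
    [Module R M] {n : ℕ} {D : ℕ → Module.End R M} (hD : D 0 = LinearMap.id) {d : ℕ → M}
    (h : ∀ i ≤ n, ∑ p ∈ antidiagonal i, D p.1 (d p.2) = 0) : ∀ i ≤ n, d i = 0 := by
  intro i
  induction i using Nat.strong_induction_on with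
  | _ i ih =>
    intro hi
    calc d i = ∑ p ∈ antidiagonal i, D p.1 (d p.2) := by
          rw [sum_eq_single (0, i)]
          · simp [hD]
          · rintro ⟨a, b⟩ hab hne
            simp only [HasAntidiagonal.mem_antidiagonal, ne_eq, Prod.mk.injEq] at hab hne
            rw [ih b (by omega) (by omega), map_zero]
          · simp
      _ = 0 := h i hi

theorem _root_.IsHS.mul {n : ℕ} {φ ψ : (Module.End k A)⟦X⟧} (hφ : IsHS k A n (coeff · φ))
    (hψ : IsHS k A n (coeff · ψ)) : IsHS k A n (coeff · (φ * ψ)) := by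
  rw [isHS_iff_leibnizDefect] at hψ ⊢
  refine ⟨by simp [coeff_mul, hφ.1, hψ.1]; rfl, fun i hi x y => ?_⟩
  rw [leibnizDefect_mul hφ hi]
  refine sum_eq_zero fun p hp => ?_
  rw [hψ.2 p.2 ((HasAntidiagonal.antidiagonal.snd_le hp).trans hi), map_zero]

theorem _root_.IsHS.invOfUnit {n : ℕ} {φ : (Module.End k A)⟦X⟧}
    (hφ : IsHS k A n (coeff · φ)) : IsHS k A n (coeff · (φ.invOfUnit 1)) := by
  have hφψ : φ * φ.invOfUnit 1 = 1 :=
    mul_invOfUnit φ 1 (by simpa [Module.End.one_eq_id] using hφ.1)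
  refine isHS_iff_leibnizDefect.2 ⟨by simp; rfl, fun i hi x y => ?_⟩
  -- `φ * φ⁻¹ = 1` has no defect, so by `leibnizDefect_mul` the defects of `φ⁻¹` solve a
  -- unitriangular system with zero right-hand side.
  refine eq_zero_of_forall_sum_antidiagonal_eq_zero (D := (coeff · φ))
    (d := (leibnizDefect (coeff · (φ.invOfUnit 1)) · x y)) hφ.1 (fun j hj => ?_) i hi
  rw [← leibnizDefect_mul hφ hj, hφψ, leibnizDefect_one]

def IsIntegrable (m N : ℕ) (D : ℕ → Module.End k A) : Prop :=
  ∃ E : ℕ → Module.End k A, IsHS k A N E ∧ ∀ i ≤ m, E i = D i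

theorem IsIntegrable.mul {m N : ℕ} {φ ψ : (Module.End k A)⟦X⟧}
    (hφ : IsIntegrable m N (coeff · φ)) (hψ : IsIntegrable m N (coeff · ψ)) :
    IsIntegrable m N (coeff · (φ * ψ)) := by
  obtain ⟨E, hE, hEφ⟩ := hφ
  obtain ⟨E', hE', hE'ψ⟩ := hψ
  exact ⟨(coeff · (mk E * mk E')), IsHS.mul (by simpa using hE) (by simpa using hE'),
    coeff_mul_eq_of_coeff_eq (by simpa using hEφ) (by simpa using hE'ψ)⟩

def expand (m : ℕ) (G : ℕ → Module.End k A) : (Module.End k A)⟦X⟧ :=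
  mk fun i => if m ∣ i then G (i / m) else 0

lemma sum_antidiagonal_eq_coeff_mul (D : ℕ → Module.End k A) (i : ℕ) (x y : A) :
    ∑ p ∈ antidiagonal i, D p.1 x * D p.2 y = coeff i (mk (D · x) * mk (D · y)) := by
  simp [coeff_mul]

lemma mk_coeff_expand_apply {m : ℕ} (hm : 0 < m) (G : ℕ → Module.End k A) (x : A) :
    mk (coeff · (expand m G) x) = PowerSeries.expand m hm.ne' (mk (G · x)) := by
  ext i
  simp only [expand, coeff_mk, PowerSeries.coeff_expand]
  split_ifs <;> rfl

theorem isHS_expand {ρ N m : ℕ} (hm : 0 < m) {G : ℕ → Module.End k A} (hG : IsHS k A ρ G)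
    (hN : N < m * (ρ + 1)) : IsHS k A N (coeff · (expand m G)) := by
  refine ⟨by simp [expand, hG.1], fun i _ hi x y => ?_⟩
  rw [sum_antidiagonal_eq_coeff_mul (coeff · (expand m G)), mk_coeff_expand_apply hm,
    mk_coeff_expand_apply hm, ← map_mul, PowerSeries.coeff_expand]
  simp only [expand, coeff_mk]
  split_ifs
  · rw [← sum_antidiagonal_eq_coeff_mul, hG.apply_mul]
    have : i < m * (ρ + 1) := lt_of_le_of_lt (by exact_mod_cast hi) hN
    exact Nat.lt_succ_iff.mp ((Nat.div_lt_iff_lt_mul hm).2 (by rwa [mul_comm]))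
  · rfl

lemma X_pow_dvd_expand_sub_one (m : ℕ) {G : ℕ → Module.End k A} (hG : G 0 = LinearMap.id) :
    X ^ m ∣ expand m G - 1 := by
  refine X_pow_dvd_iff.2 fun j hj => ?_
  rcases Nat.eq_zero_or_pos j with rfl | hj₀
  · simp [expand, hG, Module.End.one_eq_id]
  · simp [expand, coeff_one, hj₀.ne', Nat.not_dvd_of_pos_of_lt hj₀ hj]

lemma coeff_expand_self {m : ℕ} (hm : 0 < m) (G : ℕ → Module.End k A) :
    coeff m (expand m G) = G 1 := by
  simp [expand, Nat.div_self hm]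

def NoMixedTerms (D : ℕ → Module.End k A) (m : ℕ) : Prop :=
  ∀ p ∈ antidiagonal m, 0 < p.1 → 0 < p.2 → D p.1 = 0 ∨ D p.2 = 0

lemma NoMixedTerms.sum_antidiagonal_eq_zero {D : ℕ → Module.End k A} {m : ℕ}
    (hD : NoMixedTerms D m) (x y : A) :
    ∀ p ∈ antidiagonal m, 0 < p.1 → 0 < p.2 → D p.1 x * D p.2 y = 0 := by
  intro p hp h₁ h₂
  rcases hD p hp h₁ h₂ with h | h <;> simp [h]

lemma noMixedTerms_of_coeff_eq_zero {S : ℕ → Prop} (hS : ∀ p q, S (p + q) → S p ∨ S q)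
    {D : ℕ → Module.End k A} {m : ℕ} (hm : S m) (h₁ : D 1 = 0)
    (hvan : ∀ j, 2 ≤ j → j < m → S j → D j = 0) : NoMixedTerms D m := by
  have hlow : ∀ j, 0 < j → j < m → S j → D j = 0 := fun j hj₀ hjm hSj => by
    rcases (show j = 1 ∨ 2 ≤ j by omega) with rfl | hj
    exacts [h₁, hvan j hj hjm hSj]
  intro p hp hp₁ hp₂
  have hpm := mem_antidiagonal.1 hp
  rcases hS p.1 p.2 (hpm ▸ hm) with h | h
  · exact Or.inl (hlow _ hp₁ (by omega) h)
  · exact Or.inr (hlow _ hp₂ (by omega) h)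

theorem exists_derivation_eq {n m : ℕ} {D : ℕ → Module.End k A} (hD : IsHS k A n D)
    (hm : 0 < m) (hmn : m ≤ n) (hmix : NoMixedTerms D m) :
    ∃ d : Derivation k A A, d.toLinearMap = D m := by
  refine ⟨Derivation.mk' (D m) fun x y => ?_, rfl⟩
  rw [hD.apply_mul hmn,
    sum_antidiagonal_eq_add_of_interior hm (hmix.sum_antidiagonal_eq_zero x y), hD.1,
    LinearMap.id_apply, LinearMap.id_apply, smul_eq_mul, smul_eq_mul, mul_comm (D m x)]

theorem isIntegrable_succ {n : ℕ} {D : ℕ → Module.End k A} (hD : IsHS k A n D)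
    (hmix : NoMixedTerms D (n + 1)) : IsIntegrable n (n + 1) D := by
  refine ⟨fun i => if i ≤ n then D i else 0, ⟨by simp [hD.1], fun i _ hi x y => ?_⟩,
    fun i hi => if_pos hi⟩
  have hi : i ≤ n + 1 := by exact_mod_cast hi
  rcases (show i ≤ n ∨ i = n + 1 by omega) with hi | rfl
  · simp only [if_pos hi, hD.apply_mul hi]
    refine sum_congr rfl fun p hp => ?_
    have := mem_antidiagonal.1 hp
    rw [if_pos (by omega), if_pos (by omega)]
  · rw [sum_antidiagonal_eq_add_of_interior n.succ_pos]
    · simp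
    · intro p hp h₁ h₂
      have := mem_antidiagonal.1 hp
      simp only [if_pos (show p.1 ≤ n by omega), if_pos (show p.2 ≤ n by omega)]
      exact hmix.sum_antidiagonal_eq_zero x y p hp h₁ h₂

theorem exists_isHS_X_pow_dvd_sub_one_coeff_eq {n m ρ : ℕ}
    (hall : ∀ d : Derivation k A A, ∃ G : ℕ → Module.End k A,
      IsHS k A ρ G ∧ G 1 = d.toLinearMap)
    (hm : 0 < m) (hmn : m ≤ n) (hρ : n + 2 ≤ m * (ρ + 1)) {D : ℕ → Module.End k A}
    (hD : IsHS k A n D) (hmix : NoMixedTerms D m) :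
    ∃ Q : (Module.End k A)⟦X⟧,
      IsHS k A (n + 1 : ℕ) (coeff · Q) ∧ X ^ m ∣ Q - 1 ∧ coeff m Q = D m := by
  obtain ⟨d, hd⟩ := exists_derivation_eq hD hm hmn hmix
  obtain ⟨G, hG, hG₁⟩ := hall d
  exact ⟨expand m G, isHS_expand hm hG hρ, X_pow_dvd_expand_sub_one m hG.1,
    by rw [coeff_expand_self hm, hG₁, hd]⟩

theorem isIntegrable_of_coeff_eq_zero {n ρ : ℕ} {S : ℕ → Prop}
    (hall : ∀ d : Derivation k A A, ∃ G : ℕ → Module.End k A,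
      IsHS k A ρ G ∧ G 1 = d.toLinearMap)
    (hS : ∀ p q, S (p + q) → S p ∨ S q) (hSn : S (n + 1))
    (hρ : ∀ m, 2 ≤ m → S m → n + 2 ≤ m * (ρ + 1)) {m : ℕ} (hm : m ≤ n + 1) :
    ∀ φ : (Module.End k A)⟦X⟧, IsHS k A n (coeff · φ) → coeff 1 φ = 0 →
      (∀ j, 2 ≤ j → j < m → S j → coeff j φ = 0) →
      IsIntegrable n (n + 1) (coeff · φ) := by
  induction hm using Nat.decreasingInduction with
  | self => exact fun φ hφ h₁ hvan =>
      isIntegrable_succ hφ (noMixedTerms_of_coeff_eq_zero hS hSn h₁ hvan)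
  | of_succ m hm ih =>
    intro φ hφ h₁ hvan
    by_cases hkill : 2 ≤ m ∧ S m
    · obtain ⟨Q, hQ, hQ₁, hQm⟩ := exists_isHS_X_pow_dvd_sub_one_coeff_eq hall (by omega)
        (by omega) (hρ m hkill.1 hkill.2) hφ (noMixedTerms_of_coeff_eq_zero hS hkill.2 h₁ hvan)
      set φ' := φ * Q.invOfUnit 1
      have hφ'Q : φ' * Q = φ := by
        rw [mul_assoc, invOfUnit_mul _ _ (by simpa [Module.End.one_eq_id] using hQ.1), mul_one]
      have hφ' : IsHS k A n (coeff · φ') := hφ.mul (hQ.mono_s17 n.le_succ).invOfUnit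
      have hlow : ∀ j < m, coeff j φ' = coeff j φ := fun j hj =>
        hφ'Q ▸ (coeff_mul_of_X_pow_dvd_sub_one_of_lt hQ₁ hj).symm
      have hφ'm : coeff m φ' = 0 := by
        have := coeff_mul_of_X_pow_dvd_sub_one (φ := φ') (by omega) hQ₁
        rwa [hφ'Q, hQm, show coeff 0 φ' = 1 from hφ'.1, one_mul, right_eq_add] at this
      have hint := ih φ' hφ' (by rw [hlow 1 (by omega), h₁]) fun j hj₂ hjm hSj => by
        rcases (show j < m ∨ j = m by omega) with hj | rfl
        exacts [(hlow j hj).trans (hvan j hj₂ hj hSj), hφ'm]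
      simpa [hφ'Q] using hint.mul ⟨(coeff · Q), hQ, fun _ _ => rfl⟩
    · refine ih φ hφ h₁ fun j hj₂ hjm hSj => hvan j hj₂ ?_ hSj
      rcases (show j < m ∨ j = m by omega) with hj | rfl
      exacts [hj, absurd ⟨hj₂, hSj⟩ hkill]

theorem isIntegrable_of_coeff_one_eq {n ρ : ℕ} {S : ℕ → Prop}
    (hall : ∀ d : Derivation k A A, ∃ G : ℕ → Module.End k A,
      IsHS k A ρ G ∧ G 1 = d.toLinearMap)
    (hS : ∀ p q, S (p + q) → S p ∨ S q) (hSn : S (n + 1))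
    (hρ : ∀ m, 2 ≤ m → S m → n + 2 ≤ m * (ρ + 1))
    {φ ψ : (Module.End k A)⟦X⟧}
    (hφ : IsHS k A n (coeff · φ)) (hψ : IsHS k A n (coeff · ψ))
    (h₁ : coeff 1 φ = coeff 1 ψ) (hψint : IsIntegrable n (n + 1) (coeff · ψ)) :
    IsIntegrable n (n + 1) (coeff · φ) := by
  set F := φ * ψ.invOfUnit 1
  have hψ₀ : constantCoeff ψ = ↑(1 : (Module.End k A)ˣ) := by
    simpa [Module.End.one_eq_id] using hψ.1
  have hFψ : F * ψ = φ := by rw [mul_assoc, invOfUnit_mul _ _ hψ₀, mul_one]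
  have hF : IsHS k A n (coeff · F) := hφ.mul hψ.invOfUnit
  have hF₁ : coeff 1 F = 0 := by
    have hX : X ^ 1 ∣ ψ - 1 := by simpa [X_dvd_iff, sub_eq_zero] using hψ₀
    have := coeff_mul_of_X_pow_dvd_sub_one (φ := F) one_pos hX
    rwa [hFψ, h₁, show coeff 0 F = 1 from hF.1, one_mul, right_eq_add] at this
  have hFint := isIntegrable_of_coeff_eq_zero hall hS hSn hρ (m := 1) (by omega) F hF hF₁
    fun j hj₂ hj _ => absurd hj (by omega)
  simpa [hFψ] using hFint.mul hψint

lemma add_two_le_mul {n m : ℕ} (hm : 2 ≤ m) (hnm : Odd n ∨ Odd m) :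
    n + 2 ≤ m * ((if Odd n then (n + 1) / 2 else (n + 1) / 3) + 1) := by
  split_ifs with hn
  · calc n + 2 ≤ 2 * ((n + 1) / 2 + 1) := by omega
      _ ≤ m * ((n + 1) / 2 + 1) := Nat.mul_le_mul_right _ hm
  · have hm₃ : 3 ≤ m := by simp only [Nat.odd_iff] at hn hnm; omega
    calc n + 2 ≤ 3 * ((n + 1) / 3 + 1) := by omega
      _ ≤ m * ((n + 1) / 3 + 1) := Nat.mul_le_mul_right _ hm₃

end HasseSchmidt

open HasseSchmidt

theorem stmt_19_general (k A : Type*) [CommRing k] [CommRing A] [Algebra k A]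
    (n : ℕ)
    (hall : ∀ δ : Derivation k A A, ∃ D : ℕ → (A →ₗ[k] A),
      IsHS k A ((if Odd n then (n + 1) / 2 else (n + 1) / 3 : ℕ)) D ∧
      D 1 = δ.toLinearMap)
    (δ : Derivation k A A)
    (hδ : ∃ D : ℕ → (A →ₗ[k] A), IsHS k A n D ∧ D 1 = δ.toLinearMap) :
    (∀ D : ℕ → (A →ₗ[k] A), IsHS k A n D → D 1 = δ.toLinearMap →
      ∃ E : ℕ → (A →ₗ[k] A), IsHS k A (n + 1 : ℕ) E ∧ ∀ i ≤ n, E i = D i) ↔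
    (∃ D : ℕ → (A →ₗ[k] A), IsHS k A n D ∧ D 1 = δ.toLinearMap ∧
      ∃ E : ℕ → (A →ₗ[k] A), IsHS k A (n + 1 : ℕ) E ∧ ∀ i ≤ n, E i = D i) := by
  refine ⟨fun ha => ?_, fun ⟨E, hE, hE₁, hEint⟩ D hD hD₁ => ?_⟩
  · obtain ⟨D, hD, hD₁⟩ := hδ
    exact ⟨D, hD, hD₁, ha D hD hD₁⟩
  · have hS : ∀ p q : ℕ, Odd n ∨ Odd (p + q) → (Odd n ∨ Odd p) ∨ Odd n ∨ Odd q := by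
      simp only [Nat.odd_iff]; omega
    have hSn : Odd n ∨ Odd (n + 1) := by simp only [Nat.odd_iff]; omega
    have := isIntegrable_of_coeff_one_eq (φ := mk D) (ψ := mk E) hall hS hSn
      (fun m hm hnm => add_two_le_mul hm hnm) (by simpa using hD) (by simpa using hE)
      (by simp [hD₁, hE₁]) (by simp only [coeff_mk]; exact hEint)
    simp only [coeff_mk] at this
    exact this

/-- **Statement 19.** Let `n ≥ 1` and `ρ(n) = (n+1)/2` if `n` is odd,
`ρ(n) = ⌊(n+1)/3⌋` if `n` is even. If every `k`-derivation of `A` is `ρ(n)`-integrable,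
then for every `n`-integrable `k`-derivation `δ` of `A` the following are equivalent:
(a) every `n`-integral of `δ` is `(n+1)`-integrable; (b) some `n`-integral of `δ` is
`(n+1)`-integrable. -/
theorem stmt_19 (k A : Type*) [CommRing k] [CommRing A] [Algebra k A]
    (n : ℕ) (hn : 1 ≤ n)
    (hall : ∀ δ : Derivation k A A, ∃ D : ℕ → (A →ₗ[k] A),
      IsHS k A ((if Odd n then (n + 1) / 2 else (n + 1) / 3 : ℕ)) D ∧
      D 1 = δ.toLinearMap)
    (δ : Derivation k A A)
    (hδ : ∃ D : ℕ → (A →ₗ[k] A), IsHS k A n D ∧ D 1 = δ.toLinearMap) :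
    (∀ D : ℕ → (A →ₗ[k] A), IsHS k A n D → D 1 = δ.toLinearMap →
      ∃ E : ℕ → (A →ₗ[k] A), IsHS k A (n + 1 : ℕ) E ∧ ∀ i ≤ n, E i = D i) ↔
    (∃ D : ℕ → (A →ₗ[k] A), IsHS k A n D ∧ D 1 = δ.toLinearMap ∧
      ∃ E : ℕ → (A →ₗ[k] A), IsHS k A (n + 1 : ℕ) E ∧ ∀ i ≤ n, E i = D i) :=
  stmt_19_general k A n hall δ hδ
end
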